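/- Define polynomials g_n ∈ ℚ[t] by g_0 = 1 and, for n ≥ 1, n·g_n(t) = t^{n-1}·∑_{k=1}^{n} g_{k-1}(t)·g_{n-k}(t), with mean μ_n = g_n'(1) and second central moment m_2(n) = ∑_k [t^k]g_n · (k − μ_n)². Then for all n ≥ 1, m_2(n) = n(7n+13) − 2(n+1)·H_1(n) − 4(n+1)²·H_2(n), where H_m(n) = ∑_{i=1}^{n} 1/i^m. -/

import Mathlib

/-!
Write `a_n, b_n, c_n` for `g_n(1), g_n'(1), g_n''(1)`, so that
`m_2(n) = c_n + (1 - 2μ_n) b_n + μ_n² a_n`. With the recurrence in the form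
`(N + 1) g_{N+1} = t^N ∑_{i+j=N} g_i g_j`, differentiating at `t = 1` gives `a_n = 1`,
`(N + 1) b_{N+1} = N (N + 1) + 2 ∑_{i≤N} b_i` and
`(N + 1) c_{N+1} = (N + 1) N (N - 1) + 4 N ∑_{i≤N} b_i + 2 ∑_{i≤N} c_i + 2 ∑_{i+j=N} b_i b_j`.
These recurrences determine `b` and `c`, so it suffices to check that `b_n = 2 (n + 1) H_n - 4 n`
and `c_n = v_n + b_n² - b_n`, with `v_n` the claimed variance, satisfy them. The only real input
is the harmonic convolution `∑_{i+j=n} H_i H_j = (n + 1) (H_n² - H_n^{(2)}) - 2 n H_n + 2 n` and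
its analogue with weights `(i + 1) (j + 1)`, both proved by induction on `n` from
`∑_{i+j=n} H_i / (j + 1) = H_{n+1}² - H_{n+1}^{(2)}`.
-/

open Finset Polynomial

namespace Finset.Nat

variable {M : Type*} [AddCommMonoid M]

lemma sum_antidiagonal_fst (f : ℕ → M) (n : ℕ) :
    ∑ p ∈ antidiagonal n, f p.1 = ∑ i ∈ range (n + 1), f i :=
  Nat.sum_antidiagonal_eq_sum_range_succ (fun i _ ↦ f i) n

lemma sum_antidiagonal_snd (f : ℕ → M) (n : ℕ) :
    ∑ p ∈ antidiagonal n, f p.2 = ∑ i ∈ range (n + 1), f i := by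
  rw [← Nat.sum_antidiagonal_swap]
  exact sum_antidiagonal_fst f n

lemma two_mul_sum_antidiagonal_succ_mul {R : Type*} [CommSemiring R] (f : ℕ → R) (n : ℕ) :
    2 * ∑ p ∈ antidiagonal n, ((p.1 : R) + 1) * (f p.1 * f p.2)
      = (n + 2) * ∑ p ∈ antidiagonal n, f p.1 * f p.2 := by
  rw [two_mul]
  nth_rw 2 [← Nat.sum_antidiagonal_swap]
  rw [← sum_add_distrib, mul_sum]
  refine sum_congr rfl fun p hp ↦ ?_
  rw [← mem_antidiagonal.1 hp]
  simp only [Prod.fst_swap, Prod.snd_swap, Nat.cast_add]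
  ring

lemma sum_Icc_one_eq_sum_antidiagonal (f : ℕ → ℕ → M) (N : ℕ) :
    ∑ k ∈ Icc 1 (N + 1), f (k - 1) (N + 1 - k) = ∑ p ∈ antidiagonal N, f p.1 p.2 := by
  rw [Nat.sum_antidiagonal_eq_sum_range_succ, range_eq_Ico, ← Ico_add_one_right_eq_Icc,
    ← sum_Ico_add' _ 0 (N + 1) 1]
  simp

end Finset.Nat

namespace Polynomial

variable {R : Type*}

lemma derivative_derivative_mul [CommSemiring R] (p q : R[X]) :
    derivative (derivative (p * q))
      = derivative (derivative p) * q + 2 * (derivative p * derivative q)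
        + p * derivative (derivative q) := by
  simp only [derivative_mul, derivative_add]
  ring

lemma eval_one_derivative_derivative_X_pow [CommRing R] (N : ℕ) :
    (derivative (derivative (X ^ N : R[X]))).eval 1 = N * (N - 1) := by
  cases N with
  | zero => simp
  | succ N => simp [derivative_X_pow]

lemma eval_one_eq_sum_support [CommRing R] (p : R[X]) :
    p.eval 1 = ∑ k ∈ p.support, p.coeff k := by
  simp [eval_eq_sum, sum_def]

lemma eval_one_derivative_eq_sum_support [CommRing R] (p : R[X]) :
    (derivative p).eval 1 = ∑ k ∈ p.support, p.coeff k * k := by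
  simp [derivative_eval, sum_def]

lemma eval_one_derivative_derivative_eq_sum_support [CommRing R] (p : R[X]) :
    (derivative (derivative p)).eval 1 = ∑ k ∈ p.support, p.coeff k * (k * (k - 1)) := by
  rw [derivative_apply p, sum_def, derivative_sum, eval_finsetSum]
  refine sum_congr rfl fun k _ ↦ ?_
  cases k with
  | zero => simp
  | succ k =>
    rw [Nat.add_sub_cancel, derivative_C_mul_X_pow, eval_mul, eval_C, eval_pow, eval_X, one_pow,
      mul_one]
    push_cast
    ring

lemma sum_support_coeff_mul_sub_sq [CommRing R] (p : R[X]) (μ : R) :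
    ∑ k ∈ p.support, p.coeff k * ((k : R) - μ) ^ 2
      = (derivative (derivative p)).eval 1 + (1 - 2 * μ) * (derivative p).eval 1
        + μ ^ 2 * p.eval 1 := by
  rw [eval_one_derivative_derivative_eq_sum_support, eval_one_derivative_eq_sum_support,
    eval_one_eq_sum_support, mul_sum, mul_sum, ← sum_add_distrib, ← sum_add_distrib]
  refine sum_congr rfl fun k _ ↦ ?_
  ring

end Polynomial

def harmonic₂ (n : ℕ) : ℚ := ∑ i ∈ range n, ((↑(i + 1) : ℚ) ^ 2)⁻¹

@[simp]
lemma harmonic₂_zero : harmonic₂ 0 = 0 := rfl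

@[simp]
lemma harmonic₂_succ (n : ℕ) :
    harmonic₂ (n + 1) = harmonic₂ n + ((↑(n + 1) : ℚ) ^ 2)⁻¹ :=
  sum_range_succ ..

lemma harmonic₂_eq_sum_Icc (n : ℕ) :
    harmonic₂ n = ∑ i ∈ Icc 1 n, ((i : ℚ) ^ 2)⁻¹ := by
  rw [harmonic₂, range_eq_Ico, sum_Ico_add' (fun i : ℕ ↦ ((i : ℚ) ^ 2)⁻¹) 0 n (c := 1)]
  simp only [Ico_add_one_right_eq_Icc, zero_add]

lemma sum_range_harmonic (n : ℕ) : ∑ i ∈ range n, harmonic i = n * harmonic n - n := by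
  induction n with
  | zero => simp
  | succ n ih =>
    rw [sum_range_succ, ih, harmonic_succ]
    push_cast
    field_simp
    ring

lemma sum_range_succ_mul_harmonic (n : ℕ) :
    ∑ i ∈ range n, ((i : ℚ) + 1) * harmonic i
      = n * (n + 1) / 2 * harmonic n - n * (n + 3) / 4 := by
  induction n with
  | zero => simp
  | succ n ih =>
    rw [sum_range_succ, ih, harmonic_succ]
    push_cast
    field_simp
    ring

lemma sum_antidiagonal_inv_succ_mul_inv_succ (n : ℕ) :
    ∑ p ∈ antidiagonal n, ((p.1 : ℚ) + 1)⁻¹ * ((p.2 : ℚ) + 1)⁻¹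
      = 2 * harmonic (n + 1) / (n + 2) := by
  have partial_fractions : ∀ p ∈ antidiagonal n, ((p.1 : ℚ) + 1)⁻¹ * ((p.2 : ℚ) + 1)⁻¹
      = (((p.1 : ℚ) + 1)⁻¹ + ((p.2 : ℚ) + 1)⁻¹) / (n + 2) := fun p hp ↦ by
    rw [← mem_antidiagonal.1 hp, Nat.cast_add]
    field_simp
    ring
  rw [sum_congr rfl partial_fractions, ← sum_div, sum_add_distrib,
    Nat.sum_antidiagonal_fst (fun i ↦ ((i : ℚ) + 1)⁻¹),
    Nat.sum_antidiagonal_snd (fun i ↦ ((i : ℚ) + 1)⁻¹), harmonic]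
  push_cast
  ring

lemma sum_antidiagonal_harmonic_div_succ (n : ℕ) :
    ∑ p ∈ antidiagonal n, harmonic p.1 / ((p.2 : ℚ) + 1)
      = harmonic (n + 1) ^ 2 - harmonic₂ (n + 1) := by
  induction n with
  | zero => simp
  | succ n ih =>
    have step : ∀ p ∈ antidiagonal n, harmonic (p.1 + 1) / ((p.2 : ℚ) + 1)
        = harmonic p.1 / ((p.2 : ℚ) + 1) + ((p.1 : ℚ) + 1)⁻¹ * ((p.2 : ℚ) + 1)⁻¹ :=
        fun p _ ↦ by
      rw [harmonic_succ]; push_cast; ring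
    rw [Nat.sum_antidiagonal_succ, sum_congr rfl step, sum_add_distrib, ih,
      sum_antidiagonal_inv_succ_mul_inv_succ]
    simp only [harmonic_succ, harmonic₂_succ, harmonic_zero]
    push_cast
    field_simp
    ring

lemma sum_antidiagonal_harmonic_mul_harmonic (n : ℕ) :
    ∑ p ∈ antidiagonal n, harmonic p.1 * harmonic p.2
      = (n + 1) * (harmonic n ^ 2 - harmonic₂ n) - 2 * n * harmonic n + 2 * n := by
  induction n with
  | zero => simp
  | succ n ih =>
    have step : ∀ p ∈ antidiagonal n, harmonic p.1 * harmonic (p.2 + 1)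
        = harmonic p.1 * harmonic p.2 + harmonic p.1 / ((p.2 : ℚ) + 1) := fun p _ ↦ by
      rw [harmonic_succ]; push_cast; ring
    rw [Nat.sum_antidiagonal_succ', sum_congr rfl step, sum_add_distrib, ih,
      sum_antidiagonal_harmonic_div_succ]
    simp only [harmonic_succ, harmonic₂_succ, harmonic_zero]
    push_cast
    field_simp
    ring

lemma sum_antidiagonal_succ_mul_succ_mul_harmonic_mul_harmonic (n : ℕ) :
    ∑ p ∈ antidiagonal n, ((p.1 : ℚ) + 1) * ((p.2 : ℚ) + 1) * (harmonic p.1 * harmonic p.2)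
      = (37 * n ^ 3 + 186 * n ^ 2 + 209 * n) / 108
        - (5 * n ^ 3 + 30 * n ^ 2 + 37 * n) / 18 * harmonic n
        + (n + 1) * (n + 2) * (n + 3) / 6 * (harmonic n ^ 2 - harmonic₂ n) := by
  induction n with
  | zero => simp
  | succ n ih =>
    -- `(j + 2) H_{j+1} = (j + 1) H_j + H_j + 1 + 1/(j + 1)`, and `i + 1 = (n + 2) - (j + 1)`.
    have step : ∀ p ∈ antidiagonal n,
        ((p.1 : ℚ) + 1) * ((p.2 : ℚ) + 1 + 1) * (harmonic p.1 * harmonic (p.2 + 1))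
          = ((p.1 : ℚ) + 1) * ((p.2 : ℚ) + 1) * (harmonic p.1 * harmonic p.2)
            + ((p.1 : ℚ) + 1) * (harmonic p.1 * harmonic p.2) + ((p.1 : ℚ) + 1) * harmonic p.1
            + ((n : ℚ) + 2) * (harmonic p.1 / ((p.2 : ℚ) + 1)) - harmonic p.1 := fun p hp ↦ by
      rw [harmonic_succ, ← mem_antidiagonal.1 hp]
      push_cast
      field_simp
      ring
    have hsym : ∑ p ∈ antidiagonal n, ((p.1 : ℚ) + 1) * (harmonic p.1 * harmonic p.2)
        = (n + 2) / 2 * ∑ p ∈ antidiagonal n, harmonic p.1 * harmonic p.2 := by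
      linear_combination (1 / 2 : ℚ) * Nat.two_mul_sum_antidiagonal_succ_mul harmonic n
    rw [Nat.sum_antidiagonal_succ']
    push_cast
    rw [sum_congr rfl step, sum_sub_distrib, sum_add_distrib, sum_add_distrib, sum_add_distrib,
      ih, hsym, ← mul_sum, sum_antidiagonal_harmonic_mul_harmonic,
      sum_antidiagonal_harmonic_div_succ,
      Nat.sum_antidiagonal_fst (fun i ↦ ((i : ℚ) + 1) * harmonic i),
      Nat.sum_antidiagonal_fst harmonic, sum_range_succ_mul_harmonic, sum_range_harmonic]
    simp only [harmonic_succ, harmonic₂_succ, harmonic_zero]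
    push_cast
    field_simp
    ring

lemma sum_antidiagonal_succ_mul_mul_harmonic (n : ℕ) :
    ∑ p ∈ antidiagonal n, ((p.1 : ℚ) + 1) * p.2 * harmonic p.1
      = n * (n + 1) * (n + 2) / 6 * harmonic n - n * (5 * n ^ 2 + 21 * n + 10) / 36 := by
  induction n with
  | zero => simp
  | succ n ih =>
    have step : ∀ p ∈ antidiagonal n, ((p.1 : ℚ) + 1) * (p.2 + 1) * harmonic p.1
        = ((p.1 : ℚ) + 1) * p.2 * harmonic p.1 + ((p.1 : ℚ) + 1) * harmonic p.1 :=
      fun _ _ ↦ by ring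
    rw [Nat.sum_antidiagonal_succ']
    push_cast
    rw [sum_congr rfl step, sum_add_distrib, ih,
      Nat.sum_antidiagonal_fst (fun i ↦ ((i : ℚ) + 1) * harmonic i),
      sum_range_succ_mul_harmonic]
    simp only [harmonic_succ]
    push_cast
    field_simp
    ring

lemma sum_antidiagonal_fst_mul_snd (n : ℕ) :
    ∑ p ∈ antidiagonal n, (p.1 : ℚ) * p.2 = (n - 1) * n * (n + 1) / 6 := by
  induction n with
  | zero => simp
  | succ n ih =>
    have gauss : ∑ p ∈ antidiagonal n, (p.1 : ℚ) = n * (n + 1) / 2 := by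
      have := congrArg (Nat.cast (R := ℚ)) (sum_range_id_mul_two (n + 1))
      push_cast at this
      rw [Nat.sum_antidiagonal_fst (fun i ↦ (i : ℚ))]
      linarith
    rw [Nat.sum_antidiagonal_succ']
    push_cast
    simp only [mul_add, mul_one, sum_add_distrib, ih, gauss]
    ring

def quicksortMean (n : ℕ) : ℚ := 2 * (n + 1) * harmonic n - 4 * n

def quicksortVariance (n : ℕ) : ℚ :=
  n * (7 * n + 13) - 2 * (n + 1) * harmonic n - 4 * (n + 1) ^ 2 * harmonic₂ n

def quicksortSecondFactorialMoment (n : ℕ) : ℚ :=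
  quicksortVariance n + quicksortMean n ^ 2 - quicksortMean n

lemma sum_range_quicksortMean (n : ℕ) :
    ∑ i ∈ range n, quicksortMean i = n * (n + 1) * harmonic n + n / 2 - 5 * n ^ 2 / 2 := by
  induction n with
  | zero => simp
  | succ n ih =>
    rw [sum_range_succ, ih, quicksortMean, harmonic_succ]
    push_cast
    field_simp
    ring

lemma succ_mul_quicksortMean_succ (N : ℕ) :
    ((N : ℚ) + 1) * quicksortMean (N + 1)
      = N * (N + 1) + 2 * ∑ i ∈ range (N + 1), quicksortMean i := by
  rw [sum_range_quicksortMean, quicksortMean, harmonic_succ]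
  push_cast
  field_simp
  ring

lemma sum_antidiagonal_quicksortMean_mul_quicksortMean (n : ℕ) :
    ∑ p ∈ antidiagonal n, quicksortMean p.1 * quicksortMean p.2
      = (169 * n ^ 3 + 438 * n ^ 2 + 257 * n) / 27
        - (34 * n ^ 3 + 132 * n ^ 2 + 122 * n) / 9 * harmonic n
        + 2 * (n + 1) * (n + 2) * (n + 3) / 3 * (harmonic n ^ 2 - harmonic₂ n) := by
  have expand : ∀ p ∈ antidiagonal n, quicksortMean p.1 * quicksortMean p.2
      = 4 * (((p.1 : ℚ) + 1) * ((p.2 : ℚ) + 1) * (harmonic p.1 * harmonic p.2))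
        - 8 * (((p.1 : ℚ) + 1) * p.2 * harmonic p.1)
        - 8 * (((p.2 : ℚ) + 1) * p.1 * harmonic p.2) + 16 * ((p.1 : ℚ) * p.2) := fun _ _ ↦ by
    simp only [quicksortMean]
    ring
  have hswap : ∑ p ∈ antidiagonal n, ((p.2 : ℚ) + 1) * p.1 * harmonic p.2
      = ∑ p ∈ antidiagonal n, ((p.1 : ℚ) + 1) * p.2 * harmonic p.1 :=
    Nat.sum_antidiagonal_swap (f := fun p ↦ ((p.1 : ℚ) + 1) * p.2 * harmonic p.1)
  rw [sum_congr rfl expand, sum_add_distrib, sum_sub_distrib, sum_sub_distrib, ← mul_sum,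
    ← mul_sum, ← mul_sum, ← mul_sum, hswap,
    sum_antidiagonal_succ_mul_succ_mul_harmonic_mul_harmonic,
    sum_antidiagonal_succ_mul_mul_harmonic, sum_antidiagonal_fst_mul_snd]
  ring

lemma sum_range_quicksortSecondFactorialMoment (n : ℕ) :
    ∑ i ∈ range n, quicksortSecondFactorialMoment i
      = (263 * n ^ 3 + 75 * n ^ 2 - 14 * n) / 27
        - (56 * n ^ 3 + 48 * n ^ 2 + 4 * n) / 9 * harmonic n
        + (4 * n ^ 3 / 3 + 2 * n ^ 2 + 2 * n / 3) * (harmonic n ^ 2 - harmonic₂ n) := by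
  induction n with
  | zero => simp
  | succ n ih =>
    rw [sum_range_succ, ih, quicksortSecondFactorialMoment, quicksortVariance, quicksortMean,
      harmonic_succ, harmonic₂_succ]
    push_cast
    field_simp
    ring

lemma succ_mul_quicksortSecondFactorialMoment_succ (N : ℕ) :
    ((N : ℚ) + 1) * quicksortSecondFactorialMoment (N + 1)
      = (N + 1) * N * (N - 1) + 4 * N * ∑ i ∈ range (N + 1), quicksortMean i
        + 2 * ∑ i ∈ range (N + 1), quicksortSecondFactorialMoment i
        + 2 * ∑ p ∈ antidiagonal N, quicksortMean p.1 * quicksortMean p.2 := by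
  rw [sum_range_quicksortMean, sum_range_quicksortSecondFactorialMoment,
    sum_antidiagonal_quicksortMean_mul_quicksortMean, quicksortSecondFactorialMoment,
    quicksortVariance, quicksortMean, harmonic_succ, harmonic₂_succ]
  push_cast
  field_simp
  ring

structure IsQuicksortPGF (g : ℕ → ℚ[X]) : Prop where
  zero : g 0 = 1
  succ (N : ℕ) : ((N : ℚ) + 1) • g (N + 1) = X ^ N * ∑ p ∈ antidiagonal N, g p.1 * g p.2

namespace IsQuicksortPGF

variable {g : ℕ → ℚ[X]}

lemma eval_one (hg : IsQuicksortPGF g) (n : ℕ) : (g n).eval 1 = 1 := by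
  induction n using Nat.strong_induction_on with
  | _ n ih =>
    cases n with
    | zero => simp [hg.zero]
    | succ N =>
      have h := congrArg (eval 1) (hg.succ N)
      simp only [eval_smul, eval_mul, eval_pow, eval_X, one_pow, one_mul, eval_finsetSum,
        smul_eq_mul] at h
      rw [sum_congr rfl fun p hp ↦ by
        rw [ih p.1 (Nat.antidiagonal.fst_lt hp), ih p.2 (Nat.antidiagonal.snd_lt hp)]] at h
      simp only [mul_one, sum_const, Nat.card_antidiagonal, nsmul_eq_mul] at h
      push_cast at h
      exact mul_left_cancel₀ (by positivity) (h.trans (mul_one _).symm)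

lemma succ_mul_eval_one_derivative (hg : IsQuicksortPGF g) (N : ℕ) :
    ((N : ℚ) + 1) * (derivative (g (N + 1))).eval 1
      = N * (N + 1) + 2 * ∑ i ∈ range (N + 1), (derivative (g i)).eval 1 := by
  have h := congrArg (fun p ↦ (derivative p).eval 1) (hg.succ N)
  simp only [derivative_smul, derivative_mul, derivative_sum, derivative_X_pow, eval_smul,
    eval_add, eval_mul, eval_finsetSum, eval_pow, eval_X, eval_C, one_pow, mul_one, one_mul,
    hg.eval_one, smul_eq_mul] at h
  rw [h, sum_add_distrib, Nat.sum_antidiagonal_fst (fun i ↦ (derivative (g i)).eval 1),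
    Nat.sum_antidiagonal_snd (fun i ↦ (derivative (g i)).eval 1), sum_const,
    Nat.card_antidiagonal, nsmul_eq_mul]
  push_cast
  ring

lemma succ_mul_eval_one_derivative_derivative (hg : IsQuicksortPGF g) (N : ℕ) :
    ((N : ℚ) + 1) * (derivative (derivative (g (N + 1)))).eval 1
      = (N + 1) * N * (N - 1) + 4 * N * ∑ i ∈ range (N + 1), (derivative (g i)).eval 1
        + 2 * ∑ i ∈ range (N + 1), (derivative (derivative (g i))).eval 1
        + 2 * ∑ p ∈ antidiagonal N,
            (derivative (g p.1)).eval 1 * (derivative (g p.2)).eval 1 := by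
  have h := congrArg (fun p ↦ (derivative (derivative p)).eval 1) (hg.succ N)
  simp only [derivative_smul, derivative_derivative_mul, derivative_sum, eval_smul, eval_add,
    eval_mul, eval_one_derivative_derivative_X_pow] at h
  simp only [derivative_mul, eval_add, eval_mul, eval_finsetSum, derivative_X_pow, eval_pow, eval_X,
    eval_C, eval_ofNat, one_pow, mul_one, one_mul, hg.eval_one, smul_eq_mul, sum_add_distrib,
    sum_const, Nat.card_antidiagonal, nsmul_eq_mul, ← mul_sum,
    Nat.sum_antidiagonal_fst (fun i ↦ (derivative (g i)).eval 1),
    Nat.sum_antidiagonal_snd (fun i ↦ (derivative (g i)).eval 1),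
    Nat.sum_antidiagonal_fst (fun i ↦ (derivative (derivative (g i))).eval 1),
    Nat.sum_antidiagonal_snd (fun i ↦ (derivative (derivative (g i))).eval 1)] at h
  rw [h]
  push_cast
  ring

lemma eval_one_derivative (hg : IsQuicksortPGF g) (n : ℕ) :
    (derivative (g n)).eval 1 = quicksortMean n := by
  induction n using Nat.strong_induction_on with
  | _ n ih =>
    cases n with
    | zero => simp [hg.zero, quicksortMean]
    | succ N =>
      refine mul_left_cancel₀ (by positivity : (N : ℚ) + 1 ≠ 0) ?_
      rw [hg.succ_mul_eval_one_derivative, succ_mul_quicksortMean_succ,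
        sum_congr rfl fun i hi ↦ ih i (mem_range.1 hi)]

lemma eval_one_derivative_derivative (hg : IsQuicksortPGF g) (n : ℕ) :
    (derivative (derivative (g n))).eval 1 = quicksortSecondFactorialMoment n := by
  induction n using Nat.strong_induction_on with
  | _ n ih =>
    cases n with
    | zero => simp [hg.zero, quicksortSecondFactorialMoment, quicksortVariance, quicksortMean]
    | succ N =>
      refine mul_left_cancel₀ (by positivity : (N : ℚ) + 1 ≠ 0) ?_
      simp only [hg.succ_mul_eval_one_derivative_derivative, hg.eval_one_derivative,
        succ_mul_quicksortSecondFactorialMoment_succ]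
      rw [sum_congr rfl fun i hi ↦ ih i (mem_range.1 hi)]

end IsQuicksortPGF

theorem quicksort_variance_closed_form
    (g : ℕ → Polynomial ℚ)
    (hg0 : g 0 = 1)
    (hgrec : ∀ n : ℕ, 1 ≤ n →
      (n : ℚ) • g n = Polynomial.X ^ (n - 1) *
        ∑ k ∈ Finset.Icc 1 n, g (k - 1) * g (n - k))
    (μ : ℕ → ℚ)
    (hμ : ∀ n, μ n = (Polynomial.derivative (g n)).eval 1)
    (m : ℕ → ℕ → ℚ)
    (hm : ∀ r n, m r n =
      ∑ k ∈ (g n).support, (g n).coeff k * ((k : ℚ) - μ n) ^ r)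
    (H : ℕ → ℕ → ℚ)
    (hH : ∀ p n : ℕ, H p n = ∑ i ∈ Finset.Icc 1 n, 1 / (i : ℚ) ^ p) :
    ∀ n : ℕ, 1 ≤ n →
      m 2 n = (n : ℚ) * (7 * n + 13) - 2 * ((n : ℚ) + 1) * H 1 n
        - 4 * ((n : ℚ) + 1) ^ 2 * H 2 n := by
  have hg : IsQuicksortPGF g := ⟨hg0, fun N ↦ by
    simpa [Nat.sum_Icc_one_eq_sum_antidiagonal (fun i j ↦ g i * g j)]
      using hgrec (N + 1) (by omega)⟩
  intro n _
  have hH₁ : H 1 n = harmonic n := by simp [hH, harmonic_eq_sum_Icc]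
  have hH₂ : H 2 n = harmonic₂ n := by simp [hH, harmonic₂_eq_sum_Icc]
  rw [hm, hμ, sum_support_coeff_mul_sub_sq, hg.eval_one, hg.eval_one_derivative,
    hg.eval_one_derivative_derivative, hH₁, hH₂, quicksortSecondFactorialMoment,
    quicksortVariance]
  ring
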